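/- In a MAMDP (M, P_A), a Q-function and policy π satisfying the virtual policy value objective — Q(s,a) = R(s,a) + γ E_{s'~P(s,a)} E_{a'~π(s')}[Q(s',a')] together with π(s) = argmax_a Q(s,a) — exist if and only if Q = Q*_M and π is an optimal policy of the underlying MDP M. That is, sampling the bootstrap action virtually from π (rather than from the modified action distribution) yields policies that ignore the action modification. -/

import Mathlib

open scoped BigOperators

def IsDist {X : Type*} [Fintype X] (d : X → ℝ) : Prop :=
  (∀ x, 0 ≤ d x) ∧ ∑ x, d x = 1

def IsKernel {S A : Type*} [Fintype S] (P : S → A → S → ℝ) : Prop :=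
  ∀ s a, IsDist (P s a)

def IsStochPolicy {S A : Type*} [Fintype A] (π : S → A → ℝ) : Prop :=
  ∀ s, IsDist (π s)

/-- Distribution over states after `t` steps, starting from `init`, when the
executed-action distribution in state `s` is `sel s`. -/
noncomputable def stateDist {S A : Type*} [Fintype S] [Fintype A]
    (P : S → A → S → ℝ) (sel : S → A → ℝ) (init : S → ℝ) : ℕ → S → ℝ
  | 0 => init
  | t + 1 => fun s' => ∑ s, ∑ a, stateDist P sel init t s * sel s a * P s a s'

/-- Expected discounted return `E[∑ γ^t R(S_t, A_t)]` where `A_t ~ sel S_t`. -/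
noncomputable def expReturn {S A : Type*} [Fintype S] [Fintype A]
    (P : S → A → S → ℝ) (R : S → A → ℝ) (γ : ℝ) (sel : S → A → ℝ) (init : S → ℝ) : ℝ :=
  ∑' t : ℕ, γ ^ t * ∑ s, ∑ a, stateDist P sel init t s * sel s a * R s a

/-!
Along the trajectory of a policy started from `ρ`, its return differs from `∑ s, ρ s * W s` by the
discounted sum of the expected Bellman residuals `T^π W - W`; hence a supersolution (subsolution)
of a policy's Bellman equation bounds its return from above (below).

If `π` is greedy for its own virtual value `Q`, then `Q` solves the Bellman optimality equation,
whose solution is unique because the optimality operator is a `γ`-contraction in the sup norm.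
So `Q = Q*`, and `V* = ⨆ a, Q* · a` is a supersolution for every policy and a solution for the
greedy `π`. Conversely, if `π` is optimal from the point mass at `s`, its return there is at least
that of a greedy policy, i.e. `V* s`, and at most `Q*(s, π s)`, so `π` is greedy for `Q*`.
-/

open Finset

namespace IsDist

variable {X : Type*} [Fintype X] {d : X → ℝ}

lemma abs_sum_mul_le (hd : IsDist d) (f : X → ℝ) : |∑ x, d x * f x| ≤ ‖f‖ :=
  calc |∑ x, d x * f x| ≤ ∑ x, d x * ‖f‖ := by
        refine (abs_sum_le_sum_abs _ _).trans (sum_le_sum fun x _ => ?_)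
        rw [abs_mul, abs_of_nonneg (hd.1 x), ← Real.norm_eq_abs]
        exact mul_le_mul_of_nonneg_left (norm_le_pi_norm f x) (hd.1 x)
    _ = ‖f‖ := by rw [← sum_mul, hd.2, one_mul]

lemma sum_mul_le_ciSup [Nonempty X] (hd : IsDist d) (f : X → ℝ) :
    ∑ x, d x * f x ≤ ⨆ x, f x :=
  calc ∑ x, d x * f x ≤ ∑ x, d x * ⨆ x, f x := sum_le_sum fun x _ =>
        mul_le_mul_of_nonneg_left (le_ciSup (Finite.bddAbove_range f) x) (hd.1 x)
    _ = ⨆ x, f x := by rw [← sum_mul, hd.2, one_mul]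

lemma pi_single [DecidableEq X] (x : X) : IsDist (Pi.single x 1 : X → ℝ) :=
  ⟨fun y => by rw [Pi.single_apply]; positivity, by simp⟩

end IsDist

lemma summable_geometric_mul_sum_mul {X : Type*} [Fintype X] {γ : ℝ} (hγ0 : 0 ≤ γ) (hγ1 : γ < 1)
    {d : ℕ → X → ℝ} (hd : ∀ t, IsDist (d t)) (f : X → ℝ) :
    Summable fun t => γ ^ t * ∑ x, d t x * f x := by
  refine .of_norm_bounded ((summable_geometric_of_lt_one hγ0 hγ1).mul_right ‖f‖) fun t => ?_
  rw [norm_mul, norm_pow, Real.norm_of_nonneg hγ0, Real.norm_eq_abs]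
  exact mul_le_mul_of_nonneg_left ((hd t).abs_sum_mul_le f) (pow_nonneg hγ0 t)

lemma abs_ciSup_sub_ciSup_le {X : Type*} [Fintype X] [Nonempty X] (f g : X → ℝ) :
    |(⨆ x, f x) - ⨆ x, g x| ≤ ‖f - g‖ := by
  have key : ∀ f g : X → ℝ, (⨆ x, f x) ≤ (⨆ x, g x) + ‖f - g‖ := fun f g =>
    ciSup_le fun x => by
      have hx : f x - g x ≤ ‖f - g‖ := (le_abs_self _).trans (norm_le_pi_norm (f - g) x)
      linarith [le_ciSup (Finite.bddAbove_range g) x]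
  rw [abs_sub_le_iff]
  constructor
  · linarith [key f g]
  · linarith [key g f, norm_sub_rev f g]

lemma ciSup_eq_of_forall_le {X : Type*} [Finite X] [Nonempty X] {f : X → ℝ} {x₀ : X}
    (h : ∀ x, f x ≤ f x₀) : ⨆ x, f x = f x₀ :=
  le_antisymm (ciSup_le h) (le_ciSup (Finite.bddAbove_range f) x₀)

section MDP

variable {S A : Type*}

def backup [Fintype S] (P : S → A → S → ℝ) (R : S → A → ℝ) (γ : ℝ) (W : S → ℝ) (s : S) (a : A) :
    ℝ :=
  R s a + γ * ∑ s', P s a s' * W s'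

def policyBellman [Fintype S] [Fintype A] (P : S → A → S → ℝ) (R : S → A → ℝ) (γ : ℝ)
    (sel : S → A → ℝ) (W : S → ℝ) (s : S) : ℝ :=
  ∑ a, sel s a * backup P R γ W s a

def detPolicy [DecidableEq A] (π : S → A) : S → A → ℝ :=
  fun s a => if a = π s then 1 else 0

lemma backup_mono [Fintype S] {P : S → A → S → ℝ} (R : S → A → ℝ) {γ : ℝ} (hP : IsKernel P)
    (hγ0 : 0 ≤ γ) {W V : S → ℝ} (h : ∀ s, W s ≤ V s) (s : S) (a : A) :
    backup P R γ W s a ≤ backup P R γ V s a := by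
  unfold backup
  gcongr with s'
  exacts [(hP s a).1 s', h s']

lemma detPolicy_isStochPolicy [Fintype A] [DecidableEq A] (π : S → A) :
    IsStochPolicy (detPolicy π) :=
  fun s => ⟨fun a => by unfold detPolicy; positivity, by simp [detPolicy]⟩

lemma policyBellman_detPolicy [Fintype S] [Fintype A] [DecidableEq A] (P : S → A → S → ℝ)
    (R : S → A → ℝ) (γ : ℝ) (π : S → A) (W : S → ℝ) (s : S) :
    policyBellman P R γ (detPolicy π) W s = backup P R γ W s (π s) := by
  simp [policyBellman, detPolicy, ite_mul]

lemma iSup_eq_of_greedy [Finite A] [Nonempty A] {Q : S → A → ℝ} {π : S → A}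
    (hπ : ∀ s a, Q s a ≤ Q s (π s)) : (fun s => ⨆ a, Q s a) = fun s => Q s (π s) :=
  funext fun s => ciSup_eq_of_forall_le (hπ s)

section Return

variable [Fintype S] [Fintype A] {P : S → A → S → ℝ} {R : S → A → ℝ} {γ : ℝ}
  {sel : S → A → ℝ} {ρ : S → ℝ}

lemma sum_stateDist_succ_mul (W : S → ℝ) (t : ℕ) :
    ∑ s', stateDist P sel ρ (t + 1) s' * W s' =
      ∑ s, stateDist P sel ρ t s * ∑ a, sel s a * ∑ s', P s a s' * W s' := by
  simp only [stateDist, sum_mul, mul_sum]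
  rw [sum_comm]
  refine sum_congr rfl fun s _ => ?_
  rw [sum_comm]
  exact sum_congr rfl fun a _ => sum_congr rfl fun s' _ => by ring

lemma stateDist_isDist (hP : IsKernel P) (hsel : IsStochPolicy sel) (hρ : IsDist ρ) (t : ℕ) :
    IsDist (stateDist P sel ρ t) := by
  induction t with
  | zero => exact hρ
  | succ t ih =>
    refine ⟨fun s' => sum_nonneg fun s _ => sum_nonneg fun a _ => ?_, ?_⟩
    · have := (hP s a).1 s'
      have := (hsel s).1 a
      have := ih.1 s
      positivity
    · simpa [(hP _ _).2, (hsel _).2, ih.2] using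
        sum_stateDist_succ_mul (P := P) (sel := sel) (ρ := ρ) (fun _ => 1) t

lemma summable_expReturn (hP : IsKernel P) (hγ0 : 0 ≤ γ) (hγ1 : γ < 1)
    (hsel : IsStochPolicy sel) (hρ : IsDist ρ) :
    Summable fun t => γ ^ t * ∑ s, ∑ a, stateDist P sel ρ t s * sel s a * R s a := by
  simpa only [mul_sum, mul_assoc] using summable_geometric_mul_sum_mul (X := S) hγ0 hγ1
    (stateDist_isDist hP hsel hρ) fun s => ∑ a, sel s a * R s a

theorem hasSum_expReturn_sub (hP : IsKernel P) (hγ0 : 0 ≤ γ) (hγ1 : γ < 1)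
    (hsel : IsStochPolicy sel) (hρ : IsDist ρ) (W : S → ℝ) :
    HasSum (fun t => γ ^ t * ∑ s, stateDist P sel ρ t s * (policyBellman P R γ sel W s - W s))
      (expReturn P R γ sel ρ - ∑ s, ρ s * W s) := by
  set b : ℕ → ℝ := fun t => γ ^ t * ∑ s, stateDist P sel ρ t s * W s
  have hb : Summable b := summable_geometric_mul_sum_mul hγ0 hγ1 (stateDist_isDist hP hsel hρ) W
  have htel : HasSum (fun t => b (t + 1) - b t) (-b 0) := by
    simpa using ((hasSum_nat_add_iff' 1).mpr hb.hasSum).sub hb.hasSum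
  convert (summable_expReturn (R := R) hP hγ0 hγ1 hsel hρ).hasSum.add htel using 1
  · funext t
    simp only [b]
    rw [sum_stateDist_succ_mul]
    simp only [policyBellman, backup, mul_add, mul_sub, sum_add_distrib, sum_sub_distrib, mul_sum]
    ring_nf
  · simp [b, stateDist, expReturn, sub_eq_add_neg]

lemma expReturn_le_of_policyBellman_le (hP : IsKernel P) (hγ0 : 0 ≤ γ) (hγ1 : γ < 1)
    (hsel : IsStochPolicy sel) (hρ : IsDist ρ) {W : S → ℝ}
    (hW : ∀ s, policyBellman P R γ sel W s ≤ W s) :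
    expReturn P R γ sel ρ ≤ ∑ s, ρ s * W s := by
  have := (hasSum_expReturn_sub hP hγ0 hγ1 hsel hρ W).nonpos fun t =>
    mul_nonpos_of_nonneg_of_nonpos (pow_nonneg hγ0 t) <| sum_nonpos fun s _ =>
      mul_nonpos_of_nonneg_of_nonpos ((stateDist_isDist hP hsel hρ t).1 s) (sub_nonpos.2 (hW s))
  linarith

lemma le_expReturn_of_le_policyBellman (hP : IsKernel P) (hγ0 : 0 ≤ γ) (hγ1 : γ < 1)
    (hsel : IsStochPolicy sel) (hρ : IsDist ρ) {W : S → ℝ}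
    (hW : ∀ s, W s ≤ policyBellman P R γ sel W s) :
    ∑ s, ρ s * W s ≤ expReturn P R γ sel ρ := by
  have := (hasSum_expReturn_sub hP hγ0 hγ1 hsel hρ W).nonneg fun t =>
    mul_nonneg (pow_nonneg hγ0 t) <| sum_nonneg fun s _ =>
      mul_nonneg ((stateDist_isDist hP hsel hρ t).1 s) (sub_nonneg.2 (hW s))
  linarith

end Return

section Optimality

variable [Fintype S] [Fintype A] [Nonempty A] {P : S → A → S → ℝ} {R : S → A → ℝ} {γ : ℝ}

theorem eq_of_bellman_optimality (hP : IsKernel P) (hγ0 : 0 ≤ γ) (hγ1 : γ < 1)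
    {Q₁ Q₂ : S → A → ℝ} (h₁ : ∀ s a, Q₁ s a = backup P R γ (fun s' => ⨆ a', Q₁ s' a') s a)
    (h₂ : ∀ s a, Q₂ s a = backup P R γ (fun s' => ⨆ a', Q₂ s' a') s a) :
    Q₁ = Q₂ := by
  set V₁ : S → ℝ := fun s => ⨆ a, Q₁ s a
  set V₂ : S → ℝ := fun s => ⨆ a, Q₂ s a
  have hV : ‖V₁ - V₂‖ ≤ ‖Q₁ - Q₂‖ := (pi_norm_le_iff_of_nonneg (norm_nonneg _)).2 fun s =>
    (abs_ciSup_sub_ciSup_le (Q₁ s) (Q₂ s)).trans (norm_le_pi_norm (Q₁ - Q₂) s)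
  have hQ : ‖Q₁ - Q₂‖ ≤ γ * ‖V₁ - V₂‖ := by
    refine (pi_norm_le_iff_of_nonneg (by positivity)).2 fun s =>
      (pi_norm_le_iff_of_nonneg (by positivity)).2 fun a => ?_
    have hdiff : Q₁ s a - Q₂ s a = γ * ∑ s', P s a s' * (V₁ - V₂) s' := by
      rw [h₁, h₂]
      simp only [backup, Pi.sub_apply, mul_sub, sum_sub_distrib]
      ring
    rw [Pi.sub_apply, Pi.sub_apply, Real.norm_eq_abs, hdiff, abs_mul, abs_of_nonneg hγ0]
    exact mul_le_mul_of_nonneg_left ((hP s a).abs_sum_mul_le _) hγ0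
  have hzero : ‖Q₁ - Q₂‖ = 0 := by nlinarith [norm_nonneg (Q₁ - Q₂), norm_nonneg (V₁ - V₂)]
  exact sub_eq_zero.1 (norm_eq_zero.1 hzero)

variable {Qstar : S → A → ℝ}

lemma expReturn_le_sum_iSup (hP : IsKernel P) (hγ0 : 0 ≤ γ) (hγ1 : γ < 1)
    (hQstar : ∀ s a, Qstar s a = backup P R γ (fun s' => ⨆ a', Qstar s' a') s a)
    {sel : S → A → ℝ} (hsel : IsStochPolicy sel) {ρ : S → ℝ} (hρ : IsDist ρ) :
    expReturn P R γ sel ρ ≤ ∑ s, ρ s * ⨆ a, Qstar s a :=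
  expReturn_le_of_policyBellman_le hP hγ0 hγ1 hsel hρ fun s => by
    simpa only [policyBellman, ← hQstar] using (hsel s).sum_mul_le_ciSup (Qstar s)

lemma sum_iSup_le_expReturn_of_greedy [DecidableEq A] (hP : IsKernel P) (hγ0 : 0 ≤ γ)
    (hγ1 : γ < 1) (hQstar : ∀ s a, Qstar s a = backup P R γ (fun s' => ⨆ a', Qstar s' a') s a)
    {π : S → A} (hπ : ∀ s a, Qstar s a ≤ Qstar s (π s)) {ρ : S → ℝ} (hρ : IsDist ρ) :
    ∑ s, ρ s * ⨆ a, Qstar s a ≤ expReturn P R γ (detPolicy π) ρ :=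
  le_expReturn_of_le_policyBellman hP hγ0 hγ1 (detPolicy_isStochPolicy π) hρ fun s => by
    rw [policyBellman_detPolicy, ← hQstar, ciSup_eq_of_forall_le (hπ s)]

theorem greedy_of_optimal [DecidableEq A] (hP : IsKernel P) (hγ0 : 0 ≤ γ)
    (hγ1 : γ < 1) (hQstar : ∀ s a, Qstar s a = backup P R γ (fun s' => ⨆ a', Qstar s' a') s a)
    {π : S → A} (hopt : ∀ ρ : S → ℝ, IsDist ρ → ∀ π' : S → A → ℝ, IsStochPolicy π' →
      expReturn P R γ π' ρ ≤ expReturn P R γ (detPolicy π) ρ)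
    (s : S) (a : A) : Qstar s a ≤ Qstar s (π s) := by
  classical
  choose g hg using fun s => exists_eq_ciSup_of_finite (f := Qstar s)
  have hg_greedy : ∀ s a, Qstar s a ≤ Qstar s (g s) := fun s a =>
    (hg s).symm ▸ le_ciSup (Finite.bddAbove_range _) a
  -- `W` is a supersolution of `π`'s Bellman equation with `W s = Q*(s, π s)`.
  set W := Function.update (fun s => ⨆ a, Qstar s a) s (Qstar s (π s))
  have hW_le : ∀ s', W s' ≤ ⨆ a, Qstar s' a := fun s' => by
    rcases eq_or_ne s' s with rfl | hs
    · simpa [W] using le_ciSup (Finite.bddAbove_range _) (π s')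
    · simp [W, hs]
  have hπ_le : ∀ s', Qstar s' (π s') ≤ W s' := fun s' => by
    rcases eq_or_ne s' s with rfl | hs
    · simp [W]
    · simpa [W, hs] using le_ciSup (Finite.bddAbove_range _) (π s')
  have hW_super : ∀ s', policyBellman P R γ (detPolicy π) W s' ≤ W s' := fun s' =>
    calc policyBellman P R γ (detPolicy π) W s' = backup P R γ W s' (π s') :=
          policyBellman_detPolicy P R γ π W s'
      _ ≤ backup P R γ (fun s => ⨆ a, Qstar s a) s' (π s') :=
          backup_mono R hP hγ0 hW_le s' (π s')
      _ = Qstar s' (π s') := (hQstar s' (π s')).symm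
      _ ≤ W s' := hπ_le s'
  set δ : S → ℝ := Pi.single s 1
  have hδ : IsDist δ := IsDist.pi_single s
  calc Qstar s a ≤ ⨆ a, Qstar s a := le_ciSup (Finite.bddAbove_range _) a
    _ = ∑ s', δ s' * ⨆ a, Qstar s' a := by simp [δ, Pi.single_apply]
    _ ≤ expReturn P R γ (detPolicy g) δ :=
      sum_iSup_le_expReturn_of_greedy hP hγ0 hγ1 hQstar hg_greedy hδ
    _ ≤ expReturn P R γ (detPolicy π) δ :=
      hopt _ hδ _ (detPolicy_isStochPolicy g)
    _ ≤ ∑ s', δ s' * W s' :=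
      expReturn_le_of_policyBellman_le hP hγ0 hγ1 (detPolicy_isStochPolicy π) hδ hW_super
    _ = Qstar s (π s) := by simp [δ, W, Pi.single_apply]

end Optimality

end MDP

theorem virtual_policy_value_iff_mdp_optimal_general
    {S A : Type*} [Fintype S] [Fintype A] [Nonempty A] [DecidableEq A]
    (P : S → A → S → ℝ) (R : S → A → ℝ) (γ : ℝ)
    (hP : IsKernel P) (hγ0 : 0 ≤ γ) (hγ1 : γ < 1)
    -- `Qstar` is the (unique) optimal action-value function of the underlying MDP `M`
    (Qstar : S → A → ℝ)
    (hQstar : ∀ s a, Qstar s a = R s a + γ * ∑ s', P s a s' * ⨆ a', Qstar s' a')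
    (Q : S → A → ℝ) (π : S → A) :
    ((∀ s a, Q s a = R s a + γ * ∑ s', P s a s' * Q s' (π s')) ∧
      (∀ s a, Q s a ≤ Q s (π s)))
    ↔ (Q = Qstar ∧
        ∀ init : S → ℝ, IsDist init → ∀ π' : S → A → ℝ, IsStochPolicy π' →
          expReturn P R γ π' init ≤
            expReturn P R γ (fun s a => if a = π s then 1 else 0) init) := by
  change (∀ s a, Q s a = backup P R γ (fun s' => Q s' (π s')) s a) ∧ _ ↔
    Q = Qstar ∧ ∀ init, IsDist init → ∀ π', IsStochPolicy π' →
      expReturn P R γ π' init ≤ expReturn P R γ (detPolicy π) init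
  constructor
  · rintro ⟨hbellman, hgreedy⟩
    rw [← iSup_eq_of_greedy hgreedy] at hbellman
    obtain rfl := eq_of_bellman_optimality hP hγ0 hγ1 hbellman hQstar
    exact ⟨rfl, fun ρ hρ π' hπ' => (expReturn_le_sum_iSup hP hγ0 hγ1 hQstar hπ' hρ).trans
      (sum_iSup_le_expReturn_of_greedy hP hγ0 hγ1 hQstar hgreedy hρ)⟩
  · rintro ⟨rfl, hopt⟩
    have hgreedy := greedy_of_optimal hP hγ0 hγ1 hQstar hopt
    exact ⟨by rwa [← iSup_eq_of_greedy hgreedy], hgreedy⟩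

/-- on a MAMDP `(M, PA)`, a Q-function and deterministic policy π satisfy
the virtual policy value objective (bootstrap action sampled virtually from π)
iff `Q = Q*_M` and π is an optimal policy of the underlying MDP `M`;
the action modification `PA` is ignored. -/
theorem virtual_policy_value_iff_mdp_optimal
    {S A : Type*} [Fintype S] [Fintype A] [Nonempty A] [DecidableEq A]
    (P : S → A → S → ℝ) (R : S → A → ℝ) (γ : ℝ)
    (hP : IsKernel P) (hγ0 : 0 ≤ γ) (hγ1 : γ < 1)
    (PA : (S → A → ℝ) → S → A → ℝ)
    (hPA : ∀ π, IsStochPolicy π → IsStochPolicy (PA π))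
    -- `Qstar` is the (unique) optimal action-value function of the underlying MDP `M`
    (Qstar : S → A → ℝ)
    (hQstar : ∀ s a, Qstar s a = R s a + γ * ∑ s', P s a s' * ⨆ a', Qstar s' a')
    (Q : S → A → ℝ) (π : S → A) :
    ((∀ s a, Q s a = R s a + γ * ∑ s', P s a s' * Q s' (π s')) ∧
      (∀ s a, Q s a ≤ Q s (π s)))
    ↔ (Q = Qstar ∧
        ∀ init : S → ℝ, IsDist init → ∀ π' : S → A → ℝ, IsStochPolicy π' →
          expReturn P R γ π' init ≤
            expReturn P R γ (fun s a => if a = π s then 1 else 0) init) :=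
  virtual_policy_value_iff_mdp_optimal_general P R γ hP hγ0 hγ1 Qstar hQstar Q π
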